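/- Fix δ ∈ (0,1) and c₀ > 0, and for each integer k ≥ 2 let R = c₀·ln(k/δ)·√k and D = ⌊k/R⌋, and set β = ∑_{i=1}^{k} (τ(i) + Ω_I(i)). Then β ≥ 1 for every k ≥ 2, and there exist a constant C > 0 and an integer K₀ such that for all k ≥ K₀, β ≤ 1 + C·(ln k)²/√k. -/

import Mathlib

/-!
The Ideal Soliton part of `β` telescopes to exactly `1`, so `β - 1 = ∑ τ(i)`.

Upper bound: `τ(i) ≤ R/(ik)` except for the spike `τ(D) = R·ln(R/δ)/k`, so with the harmonic
bound `β - 1 ≤ (R/k)(1 + ln k + ln(R/δ))`. For large `k`, `ln(k/δ) ≤ 2 ln k` and `R/δ ≤ k²`,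
hence `R/k ≤ 2c₀ ln k/√k` and `β - 1 ≤ 8c₀ (ln k)²/√k`.

Lower bound: only the spike can be negative, and only when `R < δ < 1`. Then `D ≥ k`; if
`D = k` then `k/R < k + 1` gives `R > 1/2`, so `ln(R/δ) ≥ 1 - δ/R > -1` and the spike is
outweighed by `τ(1) = R/k`.
-/

/-- The Ideal Soliton distribution on `{1, …, k}`:
`Ω_I(1) = 1/k` and `Ω_I(d) = 1/(d(d−1))` for `d = 2, …, k`. -/
noncomputable def idealSoliton (k d : ℕ) : ℝ :=
  if d = 1 then 1 / (k : ℝ) else 1 / ((d : ℝ) * ((d : ℝ) - 1))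

/-- The function `τ` from the Robust Soliton construction: with `D = ⌊k/R⌋`,
`τ(d) = R/(dk)` for `1 ≤ d ≤ D−1`, `τ(D) = R·ln(R/δ)/k`, and `τ(d) = 0` for `D < d ≤ k`. -/
noncomputable def tauRS (k : ℕ) (R δ : ℝ) (d : ℕ) : ℝ :=
  if d < ⌊(k : ℝ) / R⌋₊ then R / ((d : ℝ) * (k : ℝ))
  else if d = ⌊(k : ℝ) / R⌋₊ then R * Real.log (R / δ) / (k : ℝ)
  else 0

/-- The normalizing constant `β = ∑_{i=1}^{k} (τ(i) + Ω_I(i))` of the Robust Soliton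
distribution. -/
noncomputable def betaRS (k : ℕ) (R δ : ℝ) : ℝ :=
  ∑ i ∈ Finset.Icc 1 k, (tauRS k R δ i + idealSoliton k i)

open Finset Filter Real

lemma sum_Icc_two_one_div_mul_sub_one {k : ℕ} (hk : 1 ≤ k) :
    ∑ i ∈ Icc 2 k, 1 / ((i : ℝ) * ((i : ℝ) - 1)) = 1 - 1 / k := by
  induction k, hk using Nat.le_induction with
  | base => simp
  | succ n hn ih =>
    have hn' : (n : ℝ) ≠ 0 := by positivity
    rw [sum_Icc_succ_top (by omega), ih]
    push_cast
    rw [add_sub_cancel_right]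
    field_simp
    ring

lemma sum_idealSoliton {k : ℕ} (hk : 1 ≤ k) : ∑ i ∈ Icc 1 k, idealSoliton k i = 1 := by
  have h : ∀ i ∈ Icc 2 k, idealSoliton k i = 1 / ((i : ℝ) * ((i : ℝ) - 1)) :=
    fun i hi => if_neg (by rw [mem_Icc] at hi; omega)
  rw [← sum_Ioc_add_eq_sum_Icc hk, ← Icc_add_one_left_eq_Ioc, one_add_one_eq_two,
    sum_congr rfl h, sum_Icc_two_one_div_mul_sub_one hk, idealSoliton, if_pos rfl]
  ring

lemma betaRS_eq_sum_tauRS_add_one {k : ℕ} (hk : 1 ≤ k) (R δ : ℝ) :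
    betaRS k R δ = ∑ i ∈ Icc 1 k, tauRS k R δ i + 1 := by
  rw [betaRS, sum_add_distrib, sum_idealSoliton hk]

section tauRS

variable {k : ℕ} {R δ : ℝ}

lemma tauRS_nonneg_of_ne (hR : 0 ≤ R) {i : ℕ} (hi : i ≠ ⌊(k : ℝ) / R⌋₊) :
    0 ≤ tauRS k R δ i := by
  unfold tauRS
  split_ifs <;> positivity

lemma tauRS_nonneg (hδ : 0 < δ) (hδR : δ ≤ R) (i : ℕ) : 0 ≤ tauRS k R δ i := by
  have : 0 ≤ log (R / δ) := log_nonneg ((one_le_div₀ hδ).2 hδR)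
  have : 0 ≤ R := hδ.le.trans hδR
  unfold tauRS
  split_ifs <;> positivity

lemma tauRS_le (hR : 0 ≤ R) (i : ℕ) :
    tauRS k R δ i ≤
      R / k * (i : ℝ)⁻¹ + if i = ⌊(k : ℝ) / R⌋₊ then R * log (R / δ) / k else 0 := by
  unfold tauRS
  split_ifs with h₁ h₂ h₂
  · omega
  · exact le_of_eq (by ring)
  · exact le_add_of_nonneg_left (by positivity)
  · positivity

lemma sum_tauRS_le (hR : 0 ≤ R) (hlog : 0 ≤ log (R / δ)) :
    ∑ i ∈ Icc 1 k, tauRS k R δ i ≤ R / k * (1 + log k + log (R / δ)) := by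
  have harmonic_le : ∑ i ∈ Icc 1 k, (i : ℝ)⁻¹ ≤ 1 + log k := by
    simpa [harmonic_eq_sum_Icc] using harmonic_le_one_add_log k
  calc ∑ i ∈ Icc 1 k, tauRS k R δ i
      ≤ ∑ i ∈ Icc 1 k, (R / k * (i : ℝ)⁻¹ +
          if i = ⌊(k : ℝ) / R⌋₊ then R * log (R / δ) / k else 0) :=
        sum_le_sum fun i _ => tauRS_le hR i
    _ ≤ R / k * (1 + log k) + R * log (R / δ) / k := by
        rw [sum_add_distrib, ← mul_sum, sum_ite_eq']
        gcongr
        split_ifs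
        · exact le_rfl
        · positivity
    _ = R / k * (1 + log k + log (R / δ)) := by ring

lemma sum_tauRS_nonneg (hk : 2 ≤ k) (hR : 0 < R) (hδ : 0 < δ) (hδ₁ : δ ≤ 1) :
    0 ≤ ∑ i ∈ Icc 1 k, tauRS k R δ i := by
  rcases le_or_gt δ R with hδR | hRδ
  · exact sum_nonneg fun i _ => tauRS_nonneg hδ hδR i
  have hk' : (2 : ℝ) ≤ k := by exact_mod_cast hk
  have hkD : k ≤ ⌊(k : ℝ) / R⌋₊ := Nat.le_floor <| by
    rw [le_div_iff₀ hR]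
    nlinarith
  rcases hkD.lt_or_eq with hkD | hkD
  · exact sum_nonneg fun i hi => tauRS_nonneg_of_ne hR.le (by rw [mem_Icc] at hi; omega)
  have hRk : (k : ℝ) < (k + 1) * R := by
    have := Nat.lt_floor_add_one ((k : ℝ) / R)
    rw [← hkD, div_lt_iff₀ hR] at this
    exact_mod_cast this
  have hlog : -1 ≤ log (R / δ) := by
    have := one_sub_inv_le_log_of_pos (div_pos hR hδ)
    rw [inv_div] at this
    have : δ / R ≤ 2 := by rw [div_le_iff₀ hR]; nlinarith
    linarith
  have hτ₁ : tauRS k R δ 1 = R / k := by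
    rw [tauRS, if_pos (by omega)]
    ring
  have hτₖ : tauRS k R δ k = R * log (R / δ) / k := by
    rw [tauRS, if_neg hkD.not_lt, if_pos hkD]
  calc 0 ≤ R / k * (1 + log (R / δ)) := by
        have : 0 ≤ 1 + log (R / δ) := by linarith
        positivity
    _ = tauRS k R δ 1 + tauRS k R δ k := by rw [hτ₁, hτₖ]; ring
    _ ≤ ∑ i ∈ (Icc 1 k).erase k, tauRS k R δ i + tauRS k R δ k := by
        gcongr
        refine single_le_sum (f := tauRS k R δ) (fun i hi => tauRS_nonneg_of_ne hR.le ?_) ?_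
        · rw [mem_erase, mem_Icc] at hi; omega
        · rw [mem_erase, mem_Icc]; omega
    _ = ∑ i ∈ Icc 1 k, tauRS k R δ i := sum_erase_add _ _ (right_mem_Icc.2 (by omega))

end tauRS

lemma sum_tauRS_le_of_large {k : ℕ} {δ c₀ : ℝ} (hδ : 0 < δ) (hδ₁ : δ ≤ 1) (hc₀ : 0 < c₀)
    (hk : 3 ≤ (k : ℝ)) (hkδ : 1 / δ ≤ k) (hc : 1 / c₀ ≤ √k) (hcδ : 2 * c₀ / δ ≤ √k) :
    ∑ i ∈ Icc 1 k, tauRS k (c₀ * log (k / δ) * √k) δ i ≤ 8 * c₀ * log k ^ 2 / √k := by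
  have hk₀ : (0 : ℝ) < k := by linarith
  have hL : 1 ≤ log k := by
    rw [le_log_iff_exp_le hk₀]
    linarith [exp_one_lt_three]
  have hlog_le : log (k / δ) ≤ 2 * log k := by
    have := log_le_log (by positivity) hkδ
    rw [one_div, log_inv] at this
    rw [log_div hk₀.ne' hδ.ne']
    linarith
  have hlog_ge : log k ≤ log (k / δ) := log_le_log hk₀ (le_div_self hk₀.le hδ hδ₁)
  set R := c₀ * log (k / δ) * √k with hR_def
  have hR₁ : 1 ≤ R := by
    rw [div_le_iff₀' hc₀] at hc
    calc 1 ≤ c₀ * √k := hc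
      _ ≤ c₀ * √k * log (k / δ) := le_mul_of_one_le_right (by positivity) (hL.trans hlog_ge)
      _ = R := by ring
  have hR : R ≤ 2 * c₀ * log k * √k := by
    calc R ≤ c₀ * (2 * log k) * √k := by rw [hR_def]; gcongr
      _ = 2 * c₀ * log k * √k := by ring
  have hRδ : R / δ ≤ k ^ 2 := by
    rw [div_le_iff₀ hδ] at hcδ ⊢
    calc R ≤ 2 * c₀ * log k * √k := hR
      _ ≤ √k * δ * log k * √k := by gcongr
      _ = δ * log k * (√k * √k) := by ring
      _ ≤ δ * k * k := by rw [mul_self_sqrt hk₀.le]; gcongr; exact log_le_self hk₀.le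
      _ = k ^ 2 * δ := by ring
  have hlogRδ₀ : 0 ≤ log (R / δ) := log_nonneg ((one_le_div₀ hδ).2 (hδ₁.trans hR₁))
  have hlogRδ : log (R / δ) ≤ 2 * log k := by
    calc log (R / δ) ≤ log (k ^ 2) := log_le_log (by positivity) hRδ
      _ = 2 * log k := by rw [log_pow]; push_cast; ring
  calc ∑ i ∈ Icc 1 k, tauRS k R δ i ≤ R / k * (1 + log k + log (R / δ)) :=
        sum_tauRS_le (by positivity) hlogRδ₀
    _ ≤ 2 * c₀ * log k * √k / k * (4 * log k) := by gcongr; linarith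
    _ = 8 * c₀ * log k ^ 2 / √k := by
        field_simp
        rw [sq_sqrt hk₀.le]
        ring

lemma eventually_sum_tauRS_le {δ c₀ : ℝ} (hδ : 0 < δ) (hδ₁ : δ ≤ 1) (hc₀ : 0 < c₀) :
    ∀ᶠ k : ℕ in atTop,
      ∑ i ∈ Icc 1 k, tauRS k (c₀ * log (k / δ) * √k) δ i ≤ 8 * c₀ * log k ^ 2 / √k := by
  have hcast := tendsto_natCast_atTop_atTop (R := ℝ)
  have hsqrt := tendsto_sqrt_atTop.comp hcast
  filter_upwards [hcast.eventually_ge_atTop 3, hcast.eventually_ge_atTop (1 / δ),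
    hsqrt.eventually_ge_atTop (1 / c₀), hsqrt.eventually_ge_atTop (2 * c₀ / δ)]
    with k hk hkδ hc hcδ
  exact sum_tauRS_le_of_large hδ hδ₁ hc₀ hk hkδ hc hcδ

/-- Fix `δ ∈ (0,1)` and `c₀ > 0`, and for each integer `k ≥ 2` let
`R = c₀·ln(k/δ)·√k`, `D = ⌊k/R⌋`, and `β = ∑_{i=1}^{k} (τ(i) + Ω_I(i))`.
Then `β ≥ 1` for every `k ≥ 2`, and there exist a constant `C > 0` and an integer `K₀`
such that for all `k ≥ K₀`, `β ≤ 1 + C·(ln k)²/√k`. -/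
theorem betaRS_bounds (δ c₀ : ℝ) (hδ : δ ∈ Set.Ioo (0 : ℝ) 1) (hc₀ : 0 < c₀) :
    (∀ k : ℕ, 2 ≤ k → 1 ≤ betaRS k (c₀ * Real.log ((k : ℝ) / δ) * Real.sqrt (k : ℝ)) δ) ∧
    (∃ C : ℝ, 0 < C ∧ ∃ K₀ : ℕ, 2 ≤ K₀ ∧ ∀ k : ℕ, K₀ ≤ k →
      betaRS k (c₀ * Real.log ((k : ℝ) / δ) * Real.sqrt (k : ℝ)) δ
        ≤ 1 + C * (Real.log (k : ℝ)) ^ 2 / Real.sqrt (k : ℝ)) := by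
  obtain ⟨hδ, hδ₁⟩ := hδ
  refine ⟨fun k hk => ?_, 8 * c₀, by positivity, ?_⟩
  · have hk' : (2 : ℝ) ≤ k := by exact_mod_cast hk
    have hR : 0 < c₀ * log (k / δ) * √k := by
      have : 0 < log (k / δ) := log_pos ((one_lt_div hδ).2 (by linarith))
      positivity
    rw [betaRS_eq_sum_tauRS_add_one (by omega)]
    linarith [sum_tauRS_nonneg hk hR hδ hδ₁.le]
  · obtain ⟨K, hK⟩ := eventually_atTop.1 (eventually_sum_tauRS_le hδ hδ₁.le hc₀)
    refine ⟨max K 2, le_max_right _ _, fun k hk => ?_⟩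
    rw [betaRS_eq_sum_tauRS_add_one (by omega)]
    linarith [hK k (le_of_max_le_left hk)]
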